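/- Let v = (x, y) ∈ ℝ² with y ≠ 0 and x/y irrational. Then the SL(2,ℤ)-orbit {γ·v : γ ∈ SL(2,ℤ)} is dense in ℝ². (This is the key density fact underlying the paper's claim that the quotient ℝ²/SL(2,ℤ) admits no nonconstant continuous maps to any Hausdorff space.) -/

import Mathlib

/-- The linear action of `SL(2,ℤ)` on `ℝ²`. -/
def SL2ZAct (γ : Matrix.SpecialLinearGroup (Fin 2) ℤ) (v : Fin 2 → ℝ) : Fin 2 → ℝ :=
  ((γ : Matrix (Fin 2) (Fin 2) ℤ).map (Int.cast : ℤ → ℝ)).mulVec v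

/-!
The closure `K` of the orbit of `v = (x, y)` is closed and `SL(2,ℤ)`-invariant. As `ℤx + ℤy` is
dense in `ℝ`, there are coprime `c, d` with `cx + dy ∈ (0, ε)`; completing `(c, d)` to the bottom
row of some `γ` gives `γv = (r, s)` with `0 < s < ε`, and the powers of `T = [[1, 1], [0, 1]]`
move the first coordinate in steps of `s`. So `K` contains the horizontal axis, hence its image
`ℝ(a, b)` under any matrix with first column a primitive vector `(a, b)`, hence every rational
point.
-/

open Matrix MatrixGroups

lemma Int.exists_isCoprime_mul_eq (p q : ℤ) :
    ∃ g a b : ℤ, 0 ≤ g ∧ IsCoprime a b ∧ p = g * a ∧ q = g * b := by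
  rcases (Int.gcd p q).eq_zero_or_pos with h | h
  · obtain ⟨rfl, rfl⟩ := Int.gcd_eq_zero_iff.1 h
    exact ⟨0, 1, 0, le_rfl, isCoprime_one_left, by simp, by simp⟩
  · obtain ⟨g, a, b, -, hab, rfl, rfl⟩ := Int.exists_gcd_one' h
    exact ⟨g, a, b, g.cast_nonneg, Int.isCoprime_iff_gcd_eq_one.2 hab, mul_comm _ _, mul_comm _ _⟩

lemma exists_isCoprime_mul_add_mul_mem_Ioo {x y : ℝ}
    (hd : Dense (AddSubgroup.closure {x, y} : Set ℝ)) {ε : ℝ} (hε : 0 < ε) :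
    ∃ c d : ℤ, IsCoprime c d ∧ c * x + d * y ∈ Set.Ioo 0 ε := by
  obtain ⟨z, hz, hzε⟩ := hd.exists_mem_open isOpen_Ioo (Set.nonempty_Ioo.2 hε)
  obtain ⟨p, q, rfl⟩ := AddSubgroup.mem_closure_pair.1 hz
  obtain ⟨g, c, d, hg, hcd, rfl, rfl⟩ := Int.exists_isCoprime_mul_eq p q
  have hz : (g * c : ℤ) • x + (g * d : ℤ) • y = (g : ℝ) * (c * x + d * y) := by
    push_cast [zsmul_eq_mul]; ring
  rw [hz] at hzε
  have hg0 : g ≠ 0 := by rintro rfl; simp at hzε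
  have hg1 : (1 : ℝ) ≤ g := by exact_mod_cast hg.lt_of_ne' hg0
  have hs := pos_of_mul_pos_right hzε.1 (by positivity)
  exact ⟨c, d, hcd, hs, (le_mul_of_one_le_left hs.le hg1).trans_lt hzε.2⟩

lemma SL2ZAct_mul (γ₁ γ₂ : SL(2, ℤ)) (v : Fin 2 → ℝ) :
    SL2ZAct (γ₁ * γ₂) v = SL2ZAct γ₁ (SL2ZAct γ₂ v) := by
  unfold SL2ZAct
  rw [mulVec_mulVec]
  exact congrArg (· *ᵥ v) (Matrix.map_mul (f := Int.castRingHom ℝ))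

lemma SL2ZAct_vecCons (γ : SL(2, ℤ)) (x y : ℝ) :
    SL2ZAct γ ![x, y] = ![γ 0 0 * x + γ 0 1 * y, γ 1 0 * x + γ 1 1 * y] := by
  ext i
  fin_cases i <;> simp [SL2ZAct, mulVec, dotProduct, Fin.sum_univ_two]

lemma SL2ZAct_T_zpow (n : ℤ) (x y : ℝ) :
    SL2ZAct (ModularGroup.T ^ n) ![x, y] = ![x + n * y, y] := by
  simp [SL2ZAct_vecCons, ModularGroup.coe_T_zpow]

def SL2ZOrbit (v : Fin 2 → ℝ) : Set (Fin 2 → ℝ) := Set.range (SL2ZAct · v)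

lemma SL2ZAct_mem_closure_SL2ZOrbit {v w : Fin 2 → ℝ} (γ : SL(2, ℤ))
    (hw : w ∈ closure (SL2ZOrbit v)) : SL2ZAct γ w ∈ closure (SL2ZOrbit v) := by
  refine map_mem_closure (Continuous.matrix_mulVec continuous_const continuous_id) hw ?_
  rintro _ ⟨δ, rfl⟩
  exact ⟨γ * δ, SL2ZAct_mul γ δ v⟩

lemma horizontal_mem_closure_SL2ZOrbit {x y : ℝ}
    (hd : Dense (AddSubgroup.closure {x, y} : Set ℝ)) (t : ℝ) :
    ![t, 0] ∈ closure (SL2ZOrbit ![x, y]) := by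
  refine Metric.mem_closure_iff.2 fun ε hε => ?_
  obtain ⟨c, d, hcd, hs, hsε⟩ := exists_isCoprime_mul_add_mul_mem_Ioo hd hε
  obtain ⟨γ, hγc, hγd⟩ := hcd.exists_SL2_row 1
  set r := (γ 0 0 : ℝ) * x + γ 0 1 * y
  set s := (c : ℝ) * x + d * y
  set k := ⌊(t - r) / s⌋
  have hγv : SL2ZAct γ ![x, y] = ![r, s] := by simp [SL2ZAct_vecCons, r, s, hγc, hγd]
  refine ⟨SL2ZAct (ModularGroup.T ^ k * γ) ![x, y], ⟨_, rfl⟩, ?_⟩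
  rw [SL2ZAct_mul, hγv, SL2ZAct_T_zpow, dist_pi_lt_iff hε]
  have hk₁ := Int.sub_floor_div_mul_nonneg (t - r) hs
  have hk₂ := Int.sub_floor_div_mul_lt (t - r) hs
  refine Fin.forall_fin_two.2 ⟨?_, by simpa [Real.dist_eq, abs_of_pos hs] using hsε⟩
  have hfirst : |t - (r + k * s)| < ε := abs_lt.2 ⟨by linarith, by linarith⟩
  simpa [Real.dist_eq] using hfirst

lemma int_line_mem_closure_SL2ZOrbit {v : Fin 2 → ℝ}
    (h : ∀ t : ℝ, ![t, 0] ∈ closure (SL2ZOrbit v)) (p q : ℤ) (t : ℝ) :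
    ![p * t, q * t] ∈ closure (SL2ZOrbit v) := by
  obtain ⟨g, a, b, -, hab, rfl, rfl⟩ := Int.exists_isCoprime_mul_eq p q
  obtain ⟨γ, hγa, hγb⟩ := hab.exists_SL2_col 0
  convert SL2ZAct_mem_closure_SL2ZOrbit γ (h (g * t)) using 1
  simp [SL2ZAct_vecCons, hγa, hγb, mul_assoc, mul_left_comm]

lemma dense_of_forall_int_line_mem {S : Set (Fin 2 → ℝ)}
    (h : ∀ (p q : ℤ) (t : ℝ), ![p * t, q * t] ∈ S) : Dense S := by
  refine (DenseRange.piMap fun _ => Rat.denseRange_cast).mono ?_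
  rintro _ ⟨r, rfl⟩
  convert h ((r 0).num * (r 1).den) ((r 1).num * (r 0).den) ((r 0).den * (r 1).den)⁻¹ using 1
  ext i
  fin_cases i <;> simp [Rat.cast_def, field]

theorem dense_SL2Z_orbit_of_irrational_slope_general (x y : ℝ)
    (hirr : Irrational (x / y)) :
    Dense {w : Fin 2 → ℝ | ∃ γ : Matrix.SpecialLinearGroup (Fin 2) ℤ,
      SL2ZAct γ ![x, y] = w} :=
  have hd := dense_addSubgroupClosure_pair_iff.2 hirr
  Dense.of_closure <| dense_of_forall_int_line_mem <|
    int_line_mem_closure_SL2ZOrbit (horizontal_mem_closure_SL2ZOrbit hd)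

/-- If `v = (x, y)` with `y ≠ 0` and `x / y` irrational, then the `SL(2,ℤ)`-orbit
of `v` is dense in `ℝ²`. -/
theorem dense_SL2Z_orbit_of_irrational_slope (x y : ℝ) (hy : y ≠ 0)
    (hirr : Irrational (x / y)) :
    Dense {w : Fin 2 → ℝ | ∃ γ : Matrix.SpecialLinearGroup (Fin 2) ℤ,
      SL2ZAct γ ![x, y] = w} :=
  dense_SL2Z_orbit_of_irrational_slope_general x y hirr
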